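/- Suppose Λ takes values in symmetric positive definite matrices and is locally Hölder continuous with exponent β ∈ (0,1), and suppose there exists α ∈ (0,1) such that for every compact K ⊂ ℝ^{n+1} there is C_K > 0 with |μ(B_Λ(X,tr))/μ(B_Λ(X,r)) − t^n| ≤ C_K·r^α for all X ∈ Σ ∩ K, t ∈ [1/2,1] and r ∈ (0,1]. Then for every X ∈ Σ the limit Θ_Λ(μ,X) = lim_{r→0} μ(B_Λ(X,r))/(ω_n r^n) exists and satisfies 0 < Θ_Λ(μ,X) < ∞. -/

import Mathlib

/-!
With `Θ(r) = μ(B_Λ(X, r)) / (ω_n rⁿ)`, the doubling hypothesis at the single point `X` says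
`Θ(t r) / Θ(r) = 1 + O(r^α)` uniformly in `t ∈ [1/2, 1]`, so `log Θ` oscillates by `O(r^α)` on
each dyadic scale. These oscillations form a geometric series, hence `log Θ` is Cauchy as
`r → 0⁺` and `Θ` tends to `exp` of its limit, which is positive.
-/

open MeasureTheory Metric Filter
open scoped RealInnerProductSpace ENNReal Topology

noncomputable section

abbrev Euc (n : ℕ) : Type := EuclideanSpace ℝ (Fin (n + 1))

/-- A continuous linear equivalence regarded as a continuous linear map. -/
def clm {n : ℕ} (A : Euc n ≃L[ℝ] Euc n) : Euc n →L[ℝ] Euc n := A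

/-- Smallest eigenvalue of a symmetric operator, via the Rayleigh quotient. -/
def lamMin {n : ℕ} (A : Euc n →L[ℝ] Euc n) : ℝ :=
  sInf {t : ℝ | ∃ v : Euc n, ‖v‖ = 1 ∧ ⟪A v, v⟫ = t}

/-- Largest eigenvalue of a symmetric operator, via the Rayleigh quotient. -/
def lamMax {n : ℕ} (A : Euc n →L[ℝ] Euc n) : ℝ :=
  sSup {t : ℝ | ∃ v : Euc n, ‖v‖ = 1 ∧ ⟪A v, v⟫ = t}

/-- Symmetric positive definite operator. -/
def IsSymPD {n : ℕ} (A : Euc n →L[ℝ] Euc n) : Prop :=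
  (∀ v w : Euc n, ⟪A v, w⟫ = ⟪v, A w⟫) ∧ ∀ v : Euc n, v ≠ 0 → 0 < ⟪A v, v⟫

/-- Local Hölder continuity (with exponent β) of a matrix-valued map, in operator norm. -/
def HolderOnCompacts {n : ℕ} (Λ : Euc n → (Euc n ≃L[ℝ] Euc n)) (β : ℝ) : Prop :=
  ∀ K : Set (Euc n), IsCompact K → ∃ H > 0, ∀ X ∈ K, ∀ Y ∈ K,
    ‖clm (Λ X) - clm (Λ Y)‖ ≤ H * ‖X - Y‖ ^ β

/-- The ellipse `B_Λ(X, r) = X + Λ(X)·B(0,r)`. -/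
def BLam {n : ℕ} (Λ : Euc n → (Euc n ≃L[ℝ] Euc n)) (X : Euc n) (r : ℝ) :
    Set (Euc n) :=
  (fun W => X + (Λ X) W) '' Metric.ball (0 : Euc n) r

/-- The non-concentric ellipse `B_Λ(X, X̄, r) = X + Λ(X̄)·B(0,r)`. -/
def BLam2 {n : ℕ} (Λ : Euc n → (Euc n ≃L[ℝ] Euc n)) (X Xb : Euc n) (r : ℝ) :
    Set (Euc n) :=
  (fun W => X + (Λ Xb) W) '' Metric.ball (0 : Euc n) r

/-- Lebesgue measure of the unit ball of `ℝ^n`. -/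
def omegaN (n : ℕ) : ℝ :=
  (MeasureTheory.volume (Metric.ball (0 : EuclideanSpace ℝ (Fin n)) 1)).toReal

/-- Support of a measure. -/
def msupport {n : ℕ} (μ : Measure (Euc n)) : Set (Euc n) :=
  {X | ∀ r : ℝ, 0 < r → 0 < μ (Metric.ball X r)}

/-- Density assumption of Theorem 1: Hölder convergence of anisotropic density ratios to 1. -/
def DensityHolder {n : ℕ} (Λ : Euc n → (Euc n ≃L[ℝ] Euc n)) (μ : Measure (Euc n)) (α : ℝ) :
    Prop :=
  ∀ K : Set (Euc n), IsCompact K → ∃ C > 0, ∀ X ∈ msupport μ ∩ K, ∀ r : ℝ, 0 < r → r ≤ 1 →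
    |(μ (BLam Λ X r)).toReal / (omegaN n * r ^ n) - 1| ≤ C * r ^ α

/-- Doubling assumption of Theorem 2: Hölder asymptotically optimal doubling. -/
def DoublingHolder {n : ℕ} (Λ : Euc n → (Euc n ≃L[ℝ] Euc n)) (μ : Measure (Euc n)) (α : ℝ) :
    Prop :=
  ∀ K : Set (Euc n), IsCompact K → ∃ C > 0, ∀ X ∈ msupport μ ∩ K,
    ∀ t ∈ Set.Icc (1 / 2 : ℝ) 1, ∀ r : ℝ, 0 < r → r ≤ 1 →
      |(μ (BLam Λ X (t * r))).toReal / (μ (BLam Λ X r)).toReal - t ^ n| ≤ C * r ^ α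

/-- `μ` is Λ-asymptotically optimally doubling of dimension `m`. -/
def IsLamAOD {n : ℕ} (Λ : Euc n → (Euc n ≃L[ℝ] Euc n)) (μ : Measure (Euc n)) (m : ℕ) : Prop :=
  ∀ K : Set (Euc n), IsCompact K → ∀ ε : ℝ, 0 < ε → ∃ r₀ > 0, ∀ r : ℝ, 0 < r → r ≤ r₀ →
    ∀ X ∈ msupport μ ∩ K, ∀ t ∈ Set.Icc (1 / 2 : ℝ) 1,
      |(μ (BLam Λ X (t * r))).toReal / (μ (BLam Λ X r)).toReal - t ^ m| ≤ ε

/-- Anisotropic blow-up map `T^Λ_{P,r}(Z) = Λ(P)⁻¹((Z − P)/r)`. -/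
def TLam {n : ℕ} (Λ : Euc n → (Euc n ≃L[ℝ] Euc n)) (P : Euc n) (r : ℝ)
    (Z : Euc n) : Euc n :=
  (Λ P).symm (r⁻¹ • (Z - P))

/-- The rescaled measure `μ_{P,r} = μ(B_Λ(P,r))⁻¹ · (T^Λ_{P,r})_* μ`. -/
def scaled {n : ℕ} (Λ : Euc n → (Euc n ≃L[ℝ] Euc n)) (μ : Measure (Euc n))
    (P : Euc n) (r : ℝ) : Measure (Euc n) :=
  (μ (BLam Λ P r))⁻¹ • Measure.map (TLam Λ P r) μ

/-- Weak convergence of a sequence of measures tested against `C_c` functions. -/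
def WeakLim {n : ℕ} (μs : ℕ → Measure (Euc n)) (ν : Measure (Euc n)) : Prop :=
  ∀ f : Euc n → ℝ, Continuous f → HasCompactSupport f →
    Tendsto (fun i => ∫ x, f x ∂(μs i)) atTop (nhds (∫ x, f x ∂ν))

/-- `ν` is a Λ-pseudo tangent measure of `μ` at `Q`. -/
def IsPseudoTangentAt {n : ℕ} (Λ : Euc n → (Euc n ≃L[ℝ] Euc n)) (μ : Measure (Euc n))
    (Q : Euc n) (ν : Measure (Euc n)) : Prop :=
  ν ≠ 0 ∧ ∃ Qs : ℕ → Euc n, ∃ ρs : ℕ → ℝ,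
    (∀ i, Qs i ∈ msupport μ) ∧ (∀ i, 0 < ρs i) ∧
    Tendsto Qs atTop (nhds Q) ∧ Tendsto ρs atTop (nhds (0 : ℝ)) ∧
    WeakLim (fun i => scaled Λ μ (Qs i) (ρs i)) ν

/-- `λ_min(K)`: infimum of smallest eigenvalues over the 1-neighborhood of `S`. -/
def lamMinOn {n : ℕ} (Λ : Euc n → (Euc n ≃L[ℝ] Euc n)) (S : Set (Euc n)) : ℝ :=
  sInf ((fun X => lamMin (clm (Λ X))) '' {X : Euc n | Metric.infDist X S ≤ 1})

/-- `λ_max(K)`: supremum of largest eigenvalues over the 1-neighborhood of `S`. -/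
def lamMaxOn {n : ℕ} (Λ : Euc n → (Euc n ≃L[ℝ] Euc n)) (S : Set (Euc n)) : ℝ :=
  sSup ((fun X => lamMax (clm (Λ X))) '' {X : Euc n | Metric.infDist X S ≤ 1})

/-- Local eccentricity `e_Λ(K) = λ_max(K)/λ_min(K)`. -/
def eLam {n : ℕ} (Λ : Euc n → (Euc n ≃L[ℝ] Euc n)) (S : Set (Euc n)) : ℝ :=
  lamMaxOn Λ S / lamMinOn Λ S

/-- Bilateral β-number `bβ_S(X,r)`: infimum over affine `m`-planes through `X` of the
normalized Hausdorff distance between `S` and the plane inside `B(X,r)`. -/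
def bbeta {n : ℕ} (m : ℕ) (S : Set (Euc n)) (X : Euc n) (r : ℝ) : ℝ :=
  sInf {d : ℝ | ∃ P : AffineSubspace ℝ (Euc n), X ∈ P ∧ Module.finrank ℝ P.direction = m ∧
    d = (1 / r) * Metric.hausdorffDist (S ∩ Metric.ball X r)
          ((P : Set (Euc n)) ∩ Metric.ball X r)}

/-- Unilateral (Jones-type) β-number `β_S(X,r)`. -/
def betaS {n : ℕ} (m : ℕ) (S : Set (Euc n)) (X : Euc n) (r : ℝ) : ℝ :=
  sInf {d : ℝ | ∃ P : AffineSubspace ℝ (Euc n), X ∈ P ∧ Module.finrank ℝ P.direction = m ∧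
    d = sSup {t : ℝ | ∃ Y ∈ S ∩ Metric.ball X r, t = Metric.infDist Y (P : Set (Euc n)) / r}}

/-- The singular set: points where the bilateral β-numbers do not tend to 0. -/
def singularSet {n : ℕ} (m : ℕ) (S : Set (Euc n)) : Set (Euc n) :=
  {X | X ∈ S ∧ 0 < Filter.limsup (fun r => bbeta m S X r) (nhdsWithin 0 (Set.Ioi (0 : ℝ)))}

end

open Set

namespace Real

lemma abs_log_le_two_mul_abs_sub_one {u : ℝ} (hu : 1 / 2 ≤ u) : |log u| ≤ 2 * |u - 1| := by
  have hu₀ : 0 < u := by linarith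
  have hupper := log_le_sub_one_of_pos hu₀
  have hlower := one_sub_inv_le_log_of_pos hu₀
  have hinv : u⁻¹ ≤ 2 := by rw [inv_le_comm₀ hu₀ two_pos]; linarith
  have hkey : 1 - u⁻¹ = (u - 1) * u⁻¹ := by field_simp
  rw [abs_le]
  constructor <;> cases abs_cases (u - 1) <;> nlinarith [inv_pos.mpr hu₀]

end Real

lemma tendsto_const_mul_rpow_nhdsGT_zero {α : ℝ} (hα : 0 < α) (A : ℝ) :
    Tendsto (fun r : ℝ => A * r ^ α) (𝓝[>] 0) (𝓝 0) := by
  have := ((Real.continuousAt_rpow_const 0 α (Or.inr hα.le)).tendsto.const_mul A).mono_left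
    (nhdsWithin_le_nhds (s := Ioi 0))
  simpa [Real.zero_rpow hα.ne'] using this

section DyadicCauchy

variable {g : ℝ → ℝ} {α A r₀ : ℝ}

/-- Summing the geometric series of the steps `r, r/2, r/4, …` gives the constant. -/
theorem abs_sub_le_of_forall_abs_mul_sub_le (hα : 0 < α)
    (hstep : ∀ t ∈ Icc (1 / 2 : ℝ) 1, ∀ r ∈ Ioo 0 r₀, |g (t * r) - g r| ≤ A * r ^ α)
    {s r : ℝ} (hs : 0 < s) (hsr : s ≤ r) (hr : r < r₀) :
    |g s - g r| ≤ A / (1 - 2⁻¹ ^ α) * r ^ α := by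
  set c : ℝ := 2⁻¹ ^ α
  have hc₀ : 0 < c := by positivity
  have hc₁ : c < 1 := Real.rpow_lt_one (by norm_num) (by norm_num) hα
  have hfixed : A / (1 - c) * c + A = A / (1 - c) := by
    field_simp [(sub_pos.mpr hc₁).ne']
    ring
  have hA_nonneg (r : ℝ) (hr : r ∈ Ioo 0 r₀) : 0 ≤ A * r ^ α := by
    have := hstep 1 ⟨by norm_num, le_rfl⟩ r hr
    rwa [one_mul, sub_self, abs_zero] at this
  have hA_le (r : ℝ) (hr : r ∈ Ioo 0 r₀) : A * r ^ α ≤ A / (1 - c) * r ^ α := by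
    have := hA_nonneg r hr
    rw [div_mul_eq_mul_div, le_div_iff₀ (by linarith)]
    nlinarith
  suffices hdyadic : ∀ k : ℕ, ∀ r ∈ Ioo 0 r₀, ∀ s ∈ Icc (r * 2⁻¹ ^ k) r,
      |g s - g r| ≤ A / (1 - c) * r ^ α by
    have hr_pos : 0 < r := hs.trans_le hsr
    obtain ⟨k, hk⟩ := exists_pow_lt_of_lt_one (div_pos hs hr_pos) (by norm_num : (2 : ℝ)⁻¹ < 1)
    rw [lt_div_iff₀ hr_pos] at hk
    exact hdyadic k r ⟨hr_pos, hr⟩ s ⟨by linarith, hsr⟩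
  intro k
  induction k with
  | zero =>
    intro r hr s hs
    obtain rfl : s = r := le_antisymm hs.2 (by simpa using hs.1)
    rw [sub_self, abs_zero]
    exact (hA_nonneg s hr).trans (hA_le s hr)
  | succ k ih =>
    intro r hr s hs
    by_cases hhalf : r / 2 ≤ s
    · have ht : s / r ∈ Icc (1 / 2 : ℝ) 1 :=
        ⟨by rw [le_div_iff₀ hr.1]; linarith, (div_le_one hr.1).mpr hs.2⟩
      have := hstep (s / r) ht r hr
      rw [div_mul_cancel₀ _ hr.1.ne'] at this
      exact this.trans (hA_le r hr)
    · push Not at hhalf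
      have hlow : |g s - g (r / 2)| ≤ A / (1 - c) * (r / 2) ^ α :=
        ih (r / 2) ⟨by linarith [hr.1], by linarith [hr.2, hr.1]⟩ s
          ⟨by rw [pow_succ] at hs; linarith [hs.1], hhalf.le⟩
      have hhigh : |g (r / 2) - g r| ≤ A * r ^ α := by
        simpa [one_div, inv_mul_eq_div] using hstep (1 / 2) (by norm_num) r hr
      have hscale : (r / 2) ^ α = c * r ^ α := by
        rw [div_eq_inv_mul, Real.mul_rpow (by norm_num) hr.1.le]
      calc |g s - g r| ≤ |g s - g (r / 2)| + |g (r / 2) - g r| := abs_sub_le _ _ _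
        _ ≤ A / (1 - c) * (c * r ^ α) + A * r ^ α := by rw [← hscale]; exact add_le_add hlow hhigh
        _ = (A / (1 - c) * c + A) * r ^ α := by ring
        _ = A / (1 - c) * r ^ α := by rw [hfixed]

theorem exists_tendsto_nhdsGT_of_abs_sub_le {φ : ℝ → ℝ} (hr₀ : 0 < r₀)
    (hφ : Tendsto φ (𝓝[>] 0) (𝓝 0))
    (hg : ∀ s r, 0 < s → s ≤ r → r < r₀ → |g s - g r| ≤ φ r) :
    ∃ ℓ, Tendsto g (𝓝[>] 0) (𝓝 ℓ) := by
  refine cauchy_map_iff_exists_tendsto.mp (Metric.cauchy_iff.mpr ⟨inferInstance, fun ε hε => ?_⟩)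
  have hsmall : ∀ᶠ r in 𝓝[>] 0, φ r < ε ∧ r < r₀ :=
    (hφ.eventually (gt_mem_nhds hε)).and (eventually_of_mem (Ioo_mem_nhdsGT hr₀) fun r hr => hr.2)
  obtain ⟨δ, hδ, hδsub⟩ := (nhdsGT_basis 0).mem_iff.mp hsmall
  refine ⟨g '' Ioo 0 δ, image_mem_map (Ioo_mem_nhdsGT hδ), ?_⟩
  rintro _ ⟨x, hx, rfl⟩ _ ⟨y, hy, rfl⟩
  rw [Real.dist_eq]
  rcases le_total x y with hxy | hyx
  · exact (hg x y hx.1 hxy (hδsub hy).2).trans_lt (hδsub hy).1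
  · rw [abs_sub_comm]
    exact (hg y x hy.1 hyx (hδsub hx).2).trans_lt (hδsub hx).1

theorem exists_tendsto_nhdsGT_of_forall_abs_mul_sub_le (hα : 0 < α) (hr₀ : 0 < r₀)
    (hstep : ∀ t ∈ Icc (1 / 2 : ℝ) 1, ∀ r ∈ Ioo 0 r₀, |g (t * r) - g r| ≤ A * r ^ α) :
    ∃ ℓ, Tendsto g (𝓝[>] 0) (𝓝 ℓ) :=
  exists_tendsto_nhdsGT_of_abs_sub_le hr₀ (tendsto_const_mul_rpow_nhdsGT_zero hα _)
    fun _ _ hs hsr hr => abs_sub_le_of_forall_abs_mul_sub_le hα hstep hs hsr hr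

end DyadicCauchy

lemma omegaN_pos (n : ℕ) : 0 < omegaN n :=
  ENNReal.toReal_pos (measure_ball_pos volume _ one_pos).ne' measure_ball_lt_top.ne

section Ellipse

variable {n : ℕ} (Λ : Euc n → (Euc n ≃L[ℝ] Euc n))

lemma isOpen_BLam (X : Euc n) (r : ℝ) : IsOpen (BLam Λ X r) :=
  ((Homeomorph.addLeft X).isOpenMap.comp (Λ X).toHomeomorph.isOpenMap) _ isOpen_ball

lemma mem_BLam_self (X : Euc n) {r : ℝ} (hr : 0 < r) : X ∈ BLam Λ X r :=
  ⟨0, mem_ball_self hr, by simp⟩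

lemma isBounded_BLam (X : Euc n) (r : ℝ) : Bornology.IsBounded (BLam Λ X r) :=
  ((isCompact_closedBall 0 r).image (by fun_prop)).isBounded.subset
    (image_mono ball_subset_closedBall)

variable {Λ} {μ : Measure (Euc n)} {X : Euc n}

lemma measure_BLam_pos (hX : X ∈ msupport μ) {r : ℝ} (hr : 0 < r) : 0 < μ (BLam Λ X r) := by
  obtain ⟨δ, hδ, hball⟩ := Metric.isOpen_iff.mp (isOpen_BLam Λ X r) X (mem_BLam_self Λ X hr)
  exact (hX δ hδ).trans_le (measure_mono hball)

lemma measure_BLam_lt_top [IsLocallyFiniteMeasure μ] (X : Euc n) (r : ℝ) :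
    μ (BLam Λ X r) < ⊤ :=
  (isBounded_BLam Λ X r).measure_lt_top

end Ellipse

section Density

variable {n : ℕ} (Λ : Euc n → (Euc n ≃L[ℝ] Euc n)) (μ : Measure (Euc n)) (X : Euc n)

/-- The ratio `μ(B_Λ(X, r)) / (ω_n rⁿ)` whose limit as `r → 0⁺` is the density `Θ_Λ(μ, X)`. -/
noncomputable def lamDensityRatio (r : ℝ) : ℝ :=
  (μ (BLam Λ X r)).toReal / (omegaN n * r ^ n)

variable {Λ μ X}

lemma lamDensityRatio_pos [IsLocallyFiniteMeasure μ] (hX : X ∈ msupport μ) {r : ℝ} (hr : 0 < r) :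
    0 < lamDensityRatio Λ μ X r :=
  div_pos (ENNReal.toReal_pos (measure_BLam_pos hX hr).ne' (measure_BLam_lt_top X r).ne)
    (mul_pos (omegaN_pos n) (pow_pos hr n))

lemma lamDensityRatio_mul_div {t r : ℝ} (ht : t ≠ 0) (hr : r ≠ 0) :
    lamDensityRatio Λ μ X (t * r) / lamDensityRatio Λ μ X r =
      (μ (BLam Λ X (t * r))).toReal / (μ (BLam Λ X r)).toReal / t ^ n := by
  have := (omegaN_pos n).ne'
  simp only [lamDensityRatio, mul_pow]
  field_simp

lemma abs_div_pow_sub_one_le {q t ε : ℝ} (ht : t ∈ Icc (1 / 2 : ℝ) 1)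
    (h : |q - t ^ n| ≤ ε) : |q / t ^ n - 1| ≤ 2 ^ n * ε := by
  have htn : 0 < t ^ n := pow_pos (by linarith [ht.1]) n
  have hinv : (t ^ n)⁻¹ ≤ 2 ^ n := by
    rw [inv_le_iff_one_le_mul₀ htn, ← mul_pow]
    exact one_le_pow₀ (by linarith [ht.1])
  rw [div_sub_one htn.ne', abs_div, abs_of_pos htn, div_eq_mul_inv, mul_comm]
  exact mul_le_mul hinv h (abs_nonneg _) (by positivity)

/-- `hsmall` keeps `Θ(t r) / Θ(r)` above `1/2`, where `|log u| ≤ 2 |u - 1|`. -/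
lemma abs_log_lamDensityRatio_sub_le [IsLocallyFiniteMeasure μ] (hX : X ∈ msupport μ)
    {C α t r : ℝ} (ht : t ∈ Icc (1 / 2 : ℝ) 1) (hr : 0 < r)
    (hdbl : |(μ (BLam Λ X (t * r))).toReal / (μ (BLam Λ X r)).toReal - t ^ n| ≤ C * r ^ α)
    (hsmall : 2 ^ n * C * r ^ α ≤ 1 / 2) :
    |Real.log (lamDensityRatio Λ μ X (t * r)) - Real.log (lamDensityRatio Λ μ X r)| ≤
      2 ^ (n + 1) * C * r ^ α := by
  have ht₀ : 0 < t := by linarith [ht.1]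
  have hratio := abs_div_pow_sub_one_le ht hdbl
  rw [← lamDensityRatio_mul_div ht₀.ne' hr.ne'] at hratio
  rw [← Real.log_div (lamDensityRatio_pos hX (mul_pos ht₀ hr)).ne' (lamDensityRatio_pos hX hr).ne']
  calc _ ≤ 2 * |lamDensityRatio Λ μ X (t * r) / lamDensityRatio Λ μ X r - 1| :=
        Real.abs_log_le_two_mul_abs_sub_one (by linarith [(abs_le.mp hratio).1])
    _ ≤ 2 ^ (n + 1) * C * r ^ α := by rw [pow_succ]; linarith

end Density

theorem density_exists_pos_finite_general (n : ℕ) (α : ℝ)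
    (hα : α ∈ Set.Ioo (0 : ℝ) 1)
    (Λ : Euc n → (Euc n ≃L[ℝ] Euc n))
    (μ : Measure (Euc n)) [IsLocallyFiniteMeasure μ]
    (hdbl : DoublingHolder Λ μ α) :
    ∀ X ∈ msupport μ, ∃ L : ℝ, 0 < L ∧
      Tendsto (fun r : ℝ => (μ (BLam Λ X r)).toReal / (omegaN n * r ^ n))
        (nhdsWithin 0 (Set.Ioi (0 : ℝ))) (nhds L) := by
  intro X hX
  obtain ⟨C, -, hC⟩ := hdbl {X} isCompact_singleton
  have hsmall : ∀ᶠ r in 𝓝[>] 0, 2 ^ n * C * r ^ α ≤ 1 / 2 ∧ r ≤ 1 :=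
    ((tendsto_const_mul_rpow_nhdsGT_zero hα.1 _).eventually (ge_mem_nhds (by norm_num))).and
      (eventually_of_mem (Ioc_mem_nhdsGT one_pos) fun r hr => hr.2)
  obtain ⟨r₀, hr₀, hr₀_small⟩ := (nhdsGT_basis 0).mem_iff.mp hsmall
  obtain ⟨ℓ, hℓ⟩ := exists_tendsto_nhdsGT_of_forall_abs_mul_sub_le hα.1 hr₀
    (g := fun r => Real.log (lamDensityRatio Λ μ X r)) fun t ht r hr =>
      abs_log_lamDensityRatio_sub_le hX ht hr.1 (hC X ⟨hX, rfl⟩ t ht r hr.1 (hr₀_small hr).2)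
        (hr₀_small hr).1
  refine ⟨Real.exp ℓ, Real.exp_pos ℓ, (Real.continuous_exp.tendsto ℓ |>.comp hℓ).congr' ?_⟩
  filter_upwards [self_mem_nhdsWithin] with r hr
  exact Real.exp_log (lamDensityRatio_pos hX hr)

/-- Existence, positivity and finiteness of the anisotropic density
under Hölder asymptotically optimal doubling. -/
theorem density_exists_pos_finite (n : ℕ) (α β : ℝ)
    (hα : α ∈ Set.Ioo (0 : ℝ) 1) (hβ : β ∈ Set.Ioo (0 : ℝ) 1)
    (Λ : Euc n → (Euc n ≃L[ℝ] Euc n))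
    (hPD : ∀ X : Euc n, IsSymPD (clm (Λ X)))
    (hHol : HolderOnCompacts Λ β)
    (μ : Measure (Euc n)) [IsLocallyFiniteMeasure μ]
    (hdbl : DoublingHolder Λ μ α) :
    ∀ X ∈ msupport μ, ∃ L : ℝ, 0 < L ∧
      Tendsto (fun r : ℝ => (μ (BLam Λ X r)).toReal / (omegaN n * r ^ n))
        (nhdsWithin 0 (Set.Ioi (0 : ℝ))) (nhds L) :=
  density_exists_pos_finite_general n α hα Λ μ hdbl
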